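/- For all integers i ≥ 0 and n > i + g, one has t_{i,n}(x) = 0; that is, (2y + 𝗊(x))^{2n−1} · D₁ⁿ(xⁱy) = n! · s_{i,n}(x) lies in Λ[x]. -/

import Mathlib

open Polynomial

noncomputable section

/-- The index set for the 3g+2 variables pᵢ (i ≤ 2g) and qᵢ (i ≤ g). -/
abbrev HypVars (g : ℕ) := Fin (2*g+1) ⊕ Fin (g+1)

/-- Λ = ℤ[p₀,…,p_{2g},q₀,…,q_g]. -/
abbrev Lam (g : ℕ) := MvPolynomial (HypVars g) ℤ

/-- 𝗉(x) = x^{2g+1} + p_{2g}x^{2g} + ⋯ + p₀ ∈ Λ[x]. -/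
def pUniv (g : ℕ) : Polynomial (Lam g) :=
  X ^ (2*g+1) + ∑ i : Fin (2*g+1), C (MvPolynomial.X (Sum.inl i)) * X ^ (i : ℕ)

/-- 𝗊(x) = q_gx^g + ⋯ + q₀ ∈ Λ[x]. -/
def qUniv (g : ℕ) : Polynomial (Lam g) :=
  ∑ i : Fin (g+1), C (MvPolynomial.X (Sum.inr i)) * X ^ (i : ℕ)

/-- F(x) = 𝗊(x)² + 4𝗉(x). -/
def FUniv (g : ℕ) : Polynomial (Lam g) := qUniv g ^ 2 + 4 * pUniv g

/-- μ = ⌊(N−2g−1)/2⌋. -/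
def muN (g N : ℕ) : ℕ := (N - (2*g+1)) / 2

/-- ν = ⌊N/2⌋ + 1. -/
def nuN (N : ℕ) : ℕ := N / 2 + 1

/-- C_{m,n} = ∏_{r=0}^{n−1} (m − 2r). -/
def Cc (m : ℤ) (n : ℕ) : ℤ := ∏ r ∈ Finset.range n, (m - 2*(r : ℤ))

/-- `IsUnivST g s t` says that `s i n`, `t i n` (for `n ≥ 1`) are the unique polynomials
`s_{i,n}(x), t_{i,n}(x) ∈ Λ[x]` with
`(2y + 𝗊(x))^{2n−1} · D₁ⁿ(xⁱy) = n!(s_{i,n}(x) + t_{i,n}(x)y)` in the fraction field `L` of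
`Λ[x][y]/(y² + 𝗊(x)y − 𝗉(x))`, where `D₁` is the derivation with `D₁x = 1` vanishing on `Λ`.
This is phrased by quantifying over every realization of that fraction field together with
its canonical derivation. -/
def IsUnivST (g : ℕ) (s t : ℕ → ℕ → Polynomial (Lam g)) : Prop :=
  ∀ (L : Type) [Field L], ∀ (φ : Polynomial (Lam g) →+* L) (y : L) (D : L → L),
    Function.Injective φ →
    y ^ 2 + φ (qUniv g) * y = φ (pUniv g) →
    (∀ u v : Polynomial (Lam g), φ v * y = φ u → v = 0) →
    (∀ a b : L, D (a + b) = D a + D b) →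
    (∀ a b : L, D (a * b) = a * D b + D a * b) →
    D (φ X) = 1 →
    (∀ c : Lam g, D (φ (C c)) = 0) →
    ∀ i n : ℕ, 1 ≤ n →
      (2 * y + φ (qUniv g)) ^ (2 * n - 1) * D^[n] (φ X ^ i * y)
        = (n.factorial : L) * (φ (s i n) + φ (t i n) * y)

/-- σ : Λ[x] → k[x], sending pᵢ, qᵢ to the corresponding coefficients of P, Q. -/
def sigmaPQ (g : ℕ) {k : Type} [CommRing k] (P Q : Polynomial k) :
    Polynomial (Lam g) →+* Polynomial k :=
  Polynomial.mapRingHom (MvPolynomial.eval₂Hom (Int.castRingHom k)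
    (Sum.elim (fun i : Fin (2*g+1) => P.coeff i) (fun i : Fin (g+1) => Q.coeff i)))

/-- `(x₀,y₀)` is an N-division point of `(P,Q)`: there are Φ, Ψ ∈ k[x], Ψ ≠ 0,
deg Ψ ≤ μ, deg Φ ≤ ν−1, and a branch η of the curve at x₀ with constant term y₀, such that
Φ(x₀+T) + Ψ(x₀+T)η ≡ 0 mod T^N. -/
def IsDivisionPoint (g : ℕ) {k : Type} [Field k] (P Q : Polynomial k) (N : ℕ)
    (x₀ y₀ : k) : Prop :=
  ∃ (Φ Ψ : Polynomial k) (η : PowerSeries k),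
    Ψ ≠ 0 ∧ Ψ.natDegree ≤ muN g N ∧ Φ.degree ≤ ((nuN N - 1 : ℕ) : WithBot ℕ) ∧
    (PowerSeries.constantCoeff : PowerSeries k →+* k) η = y₀ ∧
    η ^ 2 + ((Q.comp (C x₀ + X) : Polynomial k) : PowerSeries k) * η
      = ((P.comp (C x₀ + X) : Polynomial k) : PowerSeries k) ∧
    (PowerSeries.X : PowerSeries k) ^ N ∣
      (((Φ.comp (C x₀ + X) : Polynomial k) : PowerSeries k)
        + ((Ψ.comp (C x₀ + X) : Polynomial k) : PowerSeries k) * η)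

/-!
Let `K = Frac Λ[x]` with the derivation extending `d/dx`, and `L = K(w)` with `w² = F`, so that
`y = (w - 𝗊)/2` and `2y + 𝗊 = w`. Since `D w = (F′ / 2F) w`, the line `K·w` is stable under `D`.
Now `2xⁱy = xⁱw - xⁱ𝗊` and `Dⁿ(xⁱ𝗊) = 0` because `deg (xⁱ𝗊) ≤ i + g < n`, so `2Dⁿ(xⁱy) ∈ K·w`
and `w^{2n-1}Dⁿ(xⁱy) ∈ K·w^{2n} = K`. As `w ∉ K` (`F` has odd degree, hence is not a square
in `K`), `1` and `y` are `K`-linearly independent, which forces `n! t_{i,n} = 0`.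
-/

open scoped Differential

namespace Differential

variable (A : Type*) [CommRing A] [Differential A] (K : Type*) [Field K] [Algebra A K]

/-- `a ↦ a + a′ ε`: multiplicative exactly because `′` satisfies the Leibniz rule. -/
def toDualNumber : A →+* DualNumber K where
  toFun a := TrivSqZeroExt.inl (algebraMap A K a) + TrivSqZeroExt.inr (algebraMap A K a′)
  map_one' := by ext <;> simp
  map_mul' a b := by ext <;> simp [-DualNumber.inr_eq_smul_eps, mul_comm, add_comm]
  map_zero' := by ext <;> simp
  map_add' a b := by ext <;> simp [-DualNumber.inr_eq_smul_eps]

variable [IsFractionRing A K]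

def liftDualNumber : K →+* DualNumber K :=
  IsLocalization.lift (M := nonZeroDivisors A) (g := toDualNumber A K) fun a =>
    TrivSqZeroExt.isUnit_iff_isUnit_fst.mpr <| by
      simpa [toDualNumber] using IsLocalization.map_units K a

lemma liftDualNumber_algebraMap (a : A) :
    liftDualNumber A K (algebraMap A K a) = toDualNumber A K a :=
  IsLocalization.lift_eq _ _

lemma fst_liftDualNumber (z : K) : (liftDualNumber A K z).fst = z := by
  have : (TrivSqZeroExt.fstHom ℤ K K).toRingHom.comp (liftDualNumber A K) = RingHom.id K :=
    IsLocalization.ringHom_ext (nonZeroDivisors A) <| RingHom.ext fun a => by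
      simp [liftDualNumber_algebraMap, toDualNumber]
  exact congr($this z)

/-- The quotient rule, obtained as the `ε`-component of the extension of `toDualNumber` to the
fraction field. -/
@[reducible]
def ofIsFractionRing : Differential K where
  deriv := Derivation.mk' ((TrivSqZeroExt.sndHom K K).toAddMonoidHom.comp
      (liftDualNumber A K).toAddMonoidHom).toIntLinearMap fun a b => by
    simp [fst_liftDualNumber, mul_comm, add_comm]

lemma differentialAlgebra_ofIsFractionRing :
    letI := ofIsFractionRing A K
    DifferentialAlgebra A K :=
  letI := ofIsFractionRing A K
  ⟨fun a => by
    change (liftDualNumber A K (algebraMap A K a)).snd = _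
    simp [liftDualNumber_algebraMap, toDualNumber, -DualNumber.inr_eq_smul_eps]⟩

end Differential

lemma Polynomial.not_isSquare_of_odd_natDegree {R : Type*} [CommRing R] [IsDomain R] {f : R[X]}
    (hf : Odd f.natDegree) : ¬IsSquare f := by
  rintro ⟨c, rfl⟩
  rw [← sq, natDegree_pow] at hf
  exact Nat.not_odd_iff_even.mpr (even_two_mul _) hf

lemma IsIntegrallyClosed.isSquare_of_isSquare_algebraMap {R K : Type*} [CommRing R]
    [IsIntegrallyClosed R] [Field K] [Algebra R K] [IsFractionRing R K] {a : R}
    (h : IsSquare (algebraMap R K a)) : IsSquare a := by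
  obtain ⟨b, hb⟩ := h
  obtain ⟨c, rfl⟩ := exists_algebraMap_eq_of_isIntegral_pow (R := R) (K := K) two_pos
    (by rw [sq, ← hb]; exact isIntegral_algebraMap)
  exact ⟨c, IsFractionRing.injective R K (by rw [hb, map_mul])⟩

section SquareRoot

variable {K L : Type*} [Field K] [Field L] [Algebra K L]

lemma eq_zero_of_algebraMap_add_algebraMap_mul_eq_zero {w : L}
    (hw : w ∉ Set.range (algebraMap K L)) {a b : K}
    (h : algebraMap K L a + algebraMap K L b * w = 0) : b = 0 := by
  by_contra hb
  refine hw ⟨-a / b, ?_⟩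
  rw [map_div₀, map_neg, neg_div, neg_eq_iff_eq_neg, div_eq_iff (by simpa using hb)]
  linear_combination h

variable [CharZero K] [Differential K] [Differential L] [DifferentialAlgebra K L]
  {f : K} {w : L}

lemma deriv_eq_of_sq_eq_algebraMap (hf : f ≠ 0) (hw : w ^ 2 = algebraMap K L f) :
    w′ = algebraMap K L (f′ / (2 * f)) * w := by
  have hf' : algebraMap K L f ≠ 0 := by simpa using hf
  have hd : 2 * w * w′ = algebraMap K L f′ := by
    rw [← deriv_algebraMap, ← hw, Derivation.leibniz_pow]
    simp only [Nat.add_one_sub_one, pow_one, smul_eq_mul, nsmul_eq_mul, Nat.cast_ofNat]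
    ring
  rw [map_div₀, map_mul, map_ofNat, ← hd, ← hw]
  have hw0 : w ≠ 0 := by rintro rfl; exact hf' (by rw [← hw]; ring)
  have h2 : (2 : L) ≠ 0 := by
    rw [← map_ofNat (algebraMap K L) 2]; exact (_root_.map_ne_zero _).2 two_ne_zero
  field_simp

lemma exists_iterate_deriv_algebraMap_mul_eq (hf : f ≠ 0) (hw : w ^ 2 = algebraMap K L f)
    (n : ℕ) (k : K) : ∃ k' : K,
      (Differential.deriv : L → L)^[n] (algebraMap K L k * w) = algebraMap K L k' * w := by
  induction n with
  | zero => exact ⟨k, rfl⟩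
  | succ n ih =>
    obtain ⟨k', hk'⟩ := ih
    refine ⟨k'′ + k' * (f′ / (2 * f)), ?_⟩
    rw [Function.iterate_succ_apply', hk', Derivation.leibniz, deriv_eq_of_sq_eq_algebraMap hf hw,
      deriv_algebraMap]
    simp only [map_div₀, map_mul, smul_eq_mul, map_add]
    ring

end SquareRoot

lemma natDegree_qUniv_le (g : ℕ) : (qUniv g).natDegree ≤ g :=
  natDegree_sum_le_of_forall_le _ _ fun i _ =>
    (natDegree_C_mul_X_pow_le _ _).trans (Nat.le_of_lt_succ i.isLt)

lemma natDegree_pUniv (g : ℕ) : (pUniv g).natDegree = 2 * g + 1 := by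
  rw [pUniv, natDegree_add_eq_left_of_natDegree_lt] <;> rw [natDegree_X_pow]
  exact Nat.lt_succ_of_le <| natDegree_sum_le_of_forall_le _ _ fun i _ =>
    (natDegree_C_mul_X_pow_le _ _).trans (Nat.le_of_lt_succ i.isLt)

lemma natDegree_FUniv (g : ℕ) : (FUniv g).natDegree = 2 * g + 1 := by
  have h4p : (4 * pUniv g).natDegree = 2 * g + 1 := by
    rw [← C_ofNat, natDegree_C_mul (by norm_num), natDegree_pUniv]
  rw [FUniv, natDegree_add_eq_right_of_natDegree_lt, h4p]
  rw [h4p, natDegree_pow]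
  have := natDegree_qUniv_le g
  omega

namespace HyperellipticModel

variable (g : ℕ)

instance : Differential (Lam g)[X] := ⟨derivative'.restrictScalars ℤ⟩

abbrev K : Type := FractionRing (Lam g)[X]

instance : Differential (K g) := Differential.ofIsFractionRing (Lam g)[X] (K g)

instance : DifferentialAlgebra (Lam g)[X] (K g) :=
  Differential.differentialAlgebra_ofIsFractionRing (Lam g)[X] (K g)

def sqrtPoly : (K g)[X] := X ^ 2 - C (algebraMap (Lam g)[X] (K g) (FUniv g))

instance : Fact (sqrtPoly g).Monic := ⟨monic_X_pow_sub_C _ two_ne_zero⟩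

lemma not_isSquare_FUniv : ¬IsSquare (algebraMap (Lam g)[X] (K g) (FUniv g)) := fun h =>
  not_isSquare_of_odd_natDegree (by rw [natDegree_FUniv]; exact odd_two_mul_add_one g)
    (IsIntegrallyClosed.isSquare_of_isSquare_algebraMap h)

instance : Fact (Irreducible (sqrtPoly g)) :=
  ⟨X_pow_sub_C_irreducible_of_prime Nat.prime_two fun b hb =>
    not_isSquare_FUniv g ⟨b, by rw [← hb, sq]⟩⟩

abbrev L : Type := AdjoinRoot (sqrtPoly g)

def w : L g := AdjoinRoot.root (sqrtPoly g)

lemma w_sq : w g ^ 2 = algebraMap (K g) (L g) (algebraMap (Lam g)[X] (K g) (FUniv g)) := by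
  have := AdjoinRoot.eval₂_root (sqrtPoly g)
  rwa [sqrtPoly, eval₂_sub, eval₂_X_pow, eval₂_C, sub_eq_zero, ← AdjoinRoot.algebraMap_eq] at this

lemma w_not_mem_range : w g ∉ Set.range (algebraMap (K g) (L g)) := by
  rintro ⟨b, hb⟩
  refine not_isSquare_FUniv g ⟨b, (algebraMap (K g) (L g)).injective ?_⟩
  rw [map_mul, hb, ← sq, w_sq]

instance : CharZero (L g) := charZero_of_injective_algebraMap (algebraMap (K g) (L g)).injective

def y : L g := (w g - algebraMap (Lam g)[X] (L g) (qUniv g)) / 2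

lemma two_mul_y : 2 * y g = w g - algebraMap (Lam g)[X] (L g) (qUniv g) := by
  rw [y]; field_simp

lemma y_sq_add_qUniv_mul_y : y g ^ 2 + algebraMap (Lam g)[X] (L g) (qUniv g) * y g
    = algebraMap (Lam g)[X] (L g) (pUniv g) := by
  have hF : w g ^ 2 = algebraMap (Lam g)[X] (L g) (qUniv g) ^ 2
      + 4 * algebraMap (Lam g)[X] (L g) (pUniv g) := by
    rw [w_sq, ← IsScalarTower.algebraMap_apply, FUniv, map_add, map_mul, map_pow, map_ofNat]
  refine mul_left_cancel₀ (by norm_num : (4 : L g) ≠ 0) ?_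
  linear_combination (2 * y g + w g + algebraMap (Lam g)[X] (L g) (qUniv g)) * two_mul_y g + hF

lemma algebraMap_injective : Function.Injective (algebraMap (Lam g)[X] (L g)) := by
  rw [IsScalarTower.algebraMap_eq (Lam g)[X] (K g) (L g)]
  exact (algebraMap (K g) (L g)).injective.comp (IsFractionRing.injective _ _)

lemma two_mul_algebraMap_add_algebraMap_mul_y (a b : (Lam g)[X]) :
    2 * (algebraMap (Lam g)[X] (L g) a + algebraMap (Lam g)[X] (L g) b * y g)
      = algebraMap (K g) (L g) (algebraMap (Lam g)[X] (K g) (2 * a - b * qUniv g))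
        + algebraMap (K g) (L g) (algebraMap (Lam g)[X] (K g) b) * w g := by
  simp only [← IsScalarTower.algebraMap_apply, map_sub, map_mul, map_ofNat]
  linear_combination (algebraMap (Lam g)[X] (L g) b) * two_mul_y g

lemma deriv_algebraMap_eq (a : (Lam g)[X]) :
    (algebraMap (Lam g)[X] (L g) a)′ = algebraMap (Lam g)[X] (L g) (derivative a) := by
  rw [IsScalarTower.algebraMap_apply (Lam g)[X] (K g) (L g), deriv_algebraMap, deriv_algebraMap,
    IsScalarTower.algebraMap_apply (Lam g)[X] (K g) (L g)]
  rfl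

lemma eq_zero_of_algebraMap_add_algebraMap_mul_y_mem_range {a b : (Lam g)[X]}
    (h : algebraMap (Lam g)[X] (L g) a + algebraMap (Lam g)[X] (L g) b * y g
      ∈ Set.range (algebraMap (K g) (L g))) : b = 0 := by
  obtain ⟨k, hk⟩ := h
  have := eq_zero_of_algebraMap_add_algebraMap_mul_eq_zero (w_not_mem_range g)
    (a := algebraMap (Lam g)[X] (K g) (2 * a - b * qUniv g) - 2 * k)
    (b := algebraMap (Lam g)[X] (K g) b) <| by
      rw [map_sub, map_mul, map_ofNat]
      linear_combination -two_mul_algebraMap_add_algebraMap_mul_y g a b - 2 * hk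
  exact IsFractionRing.injective _ (K g) (by rw [this, map_zero])

lemma iterate_deriv_algebraMap (n : ℕ) (a : (Lam g)[X]) :
    (Differential.deriv : L g → L g)^[n] (algebraMap (Lam g)[X] (L g) a)
      = algebraMap (Lam g)[X] (L g) (derivative^[n] a) :=
  (Function.Semiconj.iterate_right (f := algebraMap (Lam g)[X] (L g))
    (fun a => (deriv_algebraMap_eq g a).symm) n a).symm

lemma pow_mul_iterate_deriv_mem_range (i n : ℕ) (hn : i + g < n) :
    (2 * y g + algebraMap (Lam g)[X] (L g) (qUniv g)) ^ (2 * n - 1)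
      * (Differential.deriv : L g → L g)^[n] (algebraMap (Lam g)[X] (L g) X ^ i * y g)
      ∈ Set.range (algebraMap (K g) (L g)) := by
  have hF : algebraMap (Lam g)[X] (K g) (FUniv g) ≠ 0 := fun h =>
    not_isSquare_FUniv g ⟨0, by rw [h, mul_zero]⟩
  obtain ⟨k, hk⟩ := exists_iterate_deriv_algebraMap_mul_eq hF (w_sq g) n
    (algebraMap (Lam g)[X] (K g) (X ^ i))
  have h2y : 2 * (algebraMap (Lam g)[X] (L g) X ^ i * y g)
      = algebraMap (K g) (L g) (algebraMap (Lam g)[X] (K g) (X ^ i)) * w g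
        - algebraMap (Lam g)[X] (L g) (X ^ i * qUniv g) := by
    rw [← IsScalarTower.algebraMap_apply, map_mul, map_pow]
    linear_combination (algebraMap (Lam g)[X] (L g) X ^ i) * two_mul_y g
  have hdeg : (X ^ i * qUniv g).natDegree < n := by
    have := natDegree_qUniv_le g
    exact (natDegree_mul_le.trans (by rw [natDegree_X_pow]; omega)).trans_lt hn
  have hD : 2 * (Differential.deriv : L g → L g)^[n] (algebraMap (Lam g)[X] (L g) X ^ i * y g)
      = algebraMap (K g) (L g) k * w g := by
    rw [two_mul, ← iterate_map_add, ← two_mul, h2y, iterate_map_sub, hk,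
      iterate_deriv_algebraMap, iterate_derivative_eq_zero hdeg, map_zero, sub_zero]
  refine ⟨algebraMap (Lam g)[X] (K g) (FUniv g) ^ n * k / 2, ?_⟩
  obtain ⟨m, rfl⟩ : ∃ m, n = m + 1 := ⟨n - 1, by omega⟩
  rw [two_mul_y, sub_add_cancel, map_div₀, map_mul, map_pow, map_ofNat, ← w_sq,
    div_eq_iff two_ne_zero, show 2 * (m + 1) - 1 = 2 * m + 1 by omega]
  linear_combination (-(w g ^ (2 * m + 1))) * hD

end HyperellipticModel

open HyperellipticModel in
theorem stmt14_general (g : ℕ) (s t : ℕ → ℕ → Polynomial (Lam g))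
    (hst : IsUnivST g s t) (i n : ℕ) (hn : i + g < n) :
    t i n = 0 := by
  have h := hst (L g) (algebraMap _ _) (y g) Differential.deriv (algebraMap_injective g)
    (y_sq_add_qUniv_mul_y g)
    (fun u v huv => eq_zero_of_algebraMap_add_algebraMap_mul_y_mem_range g (a := -u)
      ⟨0, by rw [map_neg, huv, map_zero, neg_add_cancel]⟩)
    (map_add _) (fun a b => by simp only [Derivation.leibniz, smul_eq_mul]; ring)
    (by rw [deriv_algebraMap_eq, derivative_X, map_one])
    (fun c => by rw [deriv_algebraMap_eq, derivative_C, map_zero]) i n (by omega)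
  have hnt : (n.factorial : (Lam g)[X]) * t i n = 0 := by
    refine eq_zero_of_algebraMap_add_algebraMap_mul_y_mem_range g
      (a := n.factorial * s i n) ?_
    rw [map_mul, map_mul, map_natCast, mul_assoc, ← mul_add, ← h]
    exact pow_mul_iterate_deriv_mem_range g i n hn
  exact (mul_eq_zero.mp hnt).resolve_left (Nat.cast_ne_zero.mpr n.factorial_ne_zero)

/-- for n > i+g one has t_{i,n} = 0, i.e.
(2y+𝗊(x))^{2n−1}·D₁ⁿ(xⁱy) = n!·s_{i,n}(x) lies in Λ[x]. -/
theorem stmt14 (g : ℕ) (hg : 1 ≤ g) (s t : ℕ → ℕ → Polynomial (Lam g))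
    (hst : IsUnivST g s t) (i n : ℕ) (hn : i + g < n) :
    t i n = 0 :=
  stmt14_general g s t hst i n hn
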